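/- arXiv:2005.01145 — 4 statements merged into one kernel-verified Lean document; each statement's English description precedes it below -/
import Mathlib

section
/- Let A ⊆ ℤ/Nℤ (N prime) be progression-free with |A| > √(2N), and let δ = |A|/N. Then ∑_{r ≠ 0} |Â(r)|³ ≥ |A|³/2. -/
open Finset

/-- The Fourier coefficient `Â(r) = ∑_{x ∈ A} e^{-2πixr/N}` of the indicator of `A ⊆ ℤ/Nℤ`. -/
noncomputable def dft {N : ℕ} (A : Finset (ZMod N)) (r : ZMod N) : ℂ :=
  ∑ x ∈ A, Complex.exp (-(2 * Real.pi * Complex.I * ((x * r).val : ℕ) / N))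

/-!
Progression-freeness leaves only the trivial solutions of `x + y = 2z` in `A`, so by orthogonality
of characters `∑_r Â(r)² Â(-2r) = N |A|`. Removing the term `r = 0`, which is `|A|³`, leaves a sum
of modulus `|A|³ - N |A| ≥ |A|³ / 2`, because `|A|² > 2N`. Since `N` is an odd prime, `r ↦ -2r`
permutes the nonzero residues, and summing the AM-GM inequality `3 a² b ≤ 2 a³ + b³` over them
bounds `∑_{r ≠ 0} |Â(r)|² |Â(-2r)|` by `∑_{r ≠ 0} |Â(r)|³`.
-/

lemma neg_two_ne_zero_of_two_lt {N : ℕ} (hN : 2 < N) : (-2 : ZMod N) ≠ 0 := by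
  rw [neg_ne_zero, ← Nat.cast_ofNat, Ne, ZMod.natCast_eq_zero_iff]
  exact fun h => absurd (Nat.le_of_dvd two_pos h) (by omega)

lemma sum_filter_ne_zero_comp_mul_left {G M : Type*} [GroupWithZero G] [Fintype G]
    [DecidableEq G] [AddCommMonoid M] (f : G → M) {c : G} (hc : c ≠ 0) :
    ∑ r ∈ univ.filter (fun r : G => r ≠ 0), f (c * r) =
      ∑ r ∈ univ.filter (fun r : G => r ≠ 0), f r :=
  sum_equiv (Equiv.mulLeft₀ c hc) (by simp [hc]) (fun _ _ => rfl)

lemma sq_mul_le_two_mul_pow_three_add_pow_three {a b : ℝ} (ha : 0 ≤ a) (hb : 0 ≤ b) :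
    3 * (a ^ 2 * b) ≤ 2 * a ^ 3 + b ^ 3 := by
  nlinarith [mul_nonneg (sq_nonneg (a - b)) (by positivity : 0 ≤ 2 * a + b)]

lemma sum_sq_mul_le_sum_pow_three {ι : Type*} (s : Finset ι) {f g : ι → ℝ}
    (hf : ∀ i ∈ s, 0 ≤ f i) (hg : ∀ i ∈ s, 0 ≤ g i)
    (hfg : ∑ i ∈ s, g i ^ 3 = ∑ i ∈ s, f i ^ 3) :
    ∑ i ∈ s, f i ^ 2 * g i ≤ ∑ i ∈ s, f i ^ 3 := by
  have h := sum_le_sum fun i hi => sq_mul_le_two_mul_pow_three_add_pow_three (hf i hi) (hg i hi)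
  rw [← mul_sum, sum_add_distrib, ← mul_sum, hfg] at h
  linarith

def apTriples {N : ℕ} (A : Finset (ZMod N)) : Finset (ZMod N × ZMod N × ZMod N) :=
  {p ∈ A ×ˢ A ×ˢ A | p.1 + p.2.1 = 2 * p.2.2}

lemma card_apTriples_of_progressionFree {N : ℕ} (A : Finset (ZMod N))
    (hA : ∀ x ∈ A, ∀ y ∈ A, ∀ z ∈ A, x + y = 2 * z → x = y ∧ y = z) :
    #(apTriples A) = #A := by
  have : apTriples A = A.image fun x => (x, x, x) := by
    ext ⟨x, y, z⟩
    simp only [apTriples, mem_filter, mem_product, mem_image, Prod.mk.injEq]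
    constructor
    · rintro ⟨⟨hx, hy, hz⟩, h⟩
      obtain ⟨rfl, rfl⟩ := hA x hx y hy z hz h
      exact ⟨x, hx, rfl, rfl, rfl⟩
    · rintro ⟨x, hx, rfl, rfl, rfl⟩
      exact ⟨⟨hx, hx, hx⟩, by ring⟩
  rw [this, card_image_of_injective _ fun x y h => (Prod.mk.inj h).1]

section
variable {N : ℕ} [NeZero N]

lemma dft_eq_sum_stdAddChar (A : Finset (ZMod N)) (r : ZMod N) :
    dft A r = ∑ x ∈ A, ZMod.stdAddChar (r * -x) := by
  refine sum_congr rfl fun x _ => ?_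
  rw [mul_neg, AddChar.map_neg_eq_inv, ZMod.stdAddChar_apply, ZMod.toCircle_apply,
    Complex.exp_neg, mul_comm r]

lemma dft_zero (A : Finset (ZMod N)) : dft A 0 = #A := by
  simp [dft_eq_sum_stdAddChar]

lemma sum_dft_sq_mul_dft_neg_two_mul (A : Finset (ZMod N)) :
    ∑ r, dft A r ^ 2 * dft A (-2 * r) = N * #(apTriples A) := by
  have expand (r : ZMod N) : dft A r ^ 2 * dft A (-2 * r) =
      ∑ p ∈ A ×ˢ A ×ˢ A, ZMod.stdAddChar (r * -(p.1 + p.2.1 - 2 * p.2.2)) := by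
    rw [dft_eq_sum_stdAddChar, dft_eq_sum_stdAddChar, sq, sum_mul_sum, sum_mul, sum_product]
    refine sum_congr rfl fun x _ => ?_
    rw [sum_mul, sum_product]
    refine sum_congr rfl fun y _ => ?_
    rw [mul_sum]
    refine sum_congr rfl fun z _ => ?_
    rw [← AddChar.map_add_eq_mul, ← AddChar.map_add_eq_mul]
    ring_nf
  simp only [expand]
  rw [sum_comm]
  simp only [AddChar.sum_mulShift _ (ZMod.isPrimitive_stdAddChar N), ZMod.card, neg_eq_zero,
    sub_eq_zero, Nat.cast_ite, Nat.cast_zero]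
  rw [← sum_filter, ← apTriples, sum_const, nsmul_eq_mul, mul_comm]

lemma sum_filter_ne_zero_dft_sq_mul_dft_neg_two_mul (A : Finset (ZMod N))
    (hA : ∀ x ∈ A, ∀ y ∈ A, ∀ z ∈ A, x + y = 2 * z → x = y ∧ y = z) :
    ∑ r ∈ univ.filter (fun r : ZMod N => r ≠ 0), dft A r ^ 2 * dft A (-2 * r) =
      N * #A - (#A : ℂ) ^ 3 := by
  rw [filter_ne', sum_erase_eq_sub (mem_univ 0), sum_dft_sq_mul_dft_neg_two_mul,
    card_apTriples_of_progressionFree A hA, mul_zero, dft_zero]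
  ring

end

theorem stmt1 {N : ℕ} [NeZero N] (hN : N.Prime) (A : Finset (ZMod N))
    (hA : ∀ x ∈ A, ∀ y ∈ A, ∀ z ∈ A, x + y = 2 * z → x = y ∧ y = z)
    (hbig : Real.sqrt (2 * N) < A.card) :
    (A.card : ℝ) ^ 3 / 2 ≤ ∑ r ∈ Finset.univ.filter (fun r : ZMod N => r ≠ 0), ‖dft A r‖ ^ 3 := by
  have := Fact.mk hN
  have hcard_pos : (0 : ℝ) < #A := (Real.sqrt_nonneg _).trans_lt hbig
  have hcard_sq : 2 * (N : ℝ) < #A ^ 2 := (Real.sqrt_lt' hcard_pos).mp hbig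
  have hcard_le : (#A : ℝ) ≤ N := by exact_mod_cast (card_le_univ A).trans_eq (ZMod.card N)
  have hN2 : 2 < N := by exact_mod_cast (by nlinarith : (2 : ℝ) < N)
  calc (#A : ℝ) ^ 3 / 2 ≤ #A ^ 3 - N * #A := by nlinarith
    _ = ‖∑ r ∈ univ.filter (fun r : ZMod N => r ≠ 0), dft A r ^ 2 * dft A (-2 * r)‖ := by
      rw [sum_filter_ne_zero_dft_sq_mul_dft_neg_two_mul A hA, norm_sub_rev,
        show (#A : ℂ) ^ 3 - N * #A = ((#A ^ 3 - N * #A : ℝ) : ℂ) by push_cast; rfl,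
        Complex.norm_real, Real.norm_of_nonneg (by nlinarith)]
    _ ≤ ∑ r ∈ univ.filter (fun r : ZMod N => r ≠ 0), ‖dft A r‖ ^ 2 * ‖dft A (-2 * r)‖ :=
      (norm_sum_le _ _).trans_eq (by simp only [norm_mul, norm_pow])
    _ ≤ _ := sum_sq_mul_le_sum_pow_three _ (fun _ _ => norm_nonneg _) (fun _ _ => norm_nonneg _)
      (sum_filter_ne_zero_comp_mul_left (‖dft A ·‖ ^ 3) (neg_two_ne_zero_of_two_lt hN2))
end

section
/- Selection lemma: Let X, H, Δ be finite subsets of an abelian group, and let c, ε > 0 satisfy |(X+H) ∩ Δ| ≥ c·|X|·|H|^{1−ε}. Then there exists X' ⊆ X with |X'| ≥ (c/4)·|X|·|H|^{−ε} such that for every nonempty Y ⊆ X' one has |(Y+H) ∩ Δ| ≥ (c²/8)·|Y|·|H|^{1−2ε}. -/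
open Finset Pointwise

lemma stmt6_aux {c y a k b : ℝ} (hc : c ≠ 0) (h : a * k = b) :
    (c ^ 2 / 8 * y * a) * (2 / c * k) = y * (c / 4 * b) := by
  subst h; field_simp; ring

theorem stmt6 {G : Type*} [AddCommGroup G] [DecidableEq G] (X H Δ : Finset G) (c ε : ℝ)
    (hc : 0 < c) (hε : 0 < ε)
    (h : c * X.card * (H.card : ℝ) ^ (1 - ε) ≤ (((X + H) ∩ Δ).card : ℝ)) :
    ∃ X' ⊆ X, (c / 4) * X.card * (H.card : ℝ) ^ (-ε) ≤ (X'.card : ℝ) ∧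
      ∀ Y ⊆ X', Y.Nonempty →
        (c ^ 2 / 8) * Y.card * (H.card : ℝ) ^ (1 - 2 * ε) ≤ (((Y + H) ∩ Δ).card : ℝ) := by
  classical
  rcases H.eq_empty_or_nonempty with hH | hH
  · refine ⟨∅, empty_subset _, ?_, ?_⟩
    · simp [hH, Real.zero_rpow (neg_ne_zero.mpr hε.ne')]
    · intro Y hY hYne
      exact absurd (Finset.subset_empty.mp hY) hYne.ne_empty
  -- main case
  have hn0 : (0:ℝ) < (H.card : ℝ) := Nat.cast_pos.mpr hH.card_pos
  set n : ℝ := (H.card : ℝ) with hn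
  have hPε : (0:ℝ) < n ^ ε := Real.rpow_pos_of_pos hn0 ε
  have hP1ε : (0:ℝ) < n ^ (1 - ε) := Real.rpow_pos_of_pos hn0 _
  -- representation count
  set r : G → ℕ := fun t => (X.filter fun x => t - x ∈ H).card with hr
  have swap : ∀ (S A : Finset G),
      ∑ t ∈ S, (A.filter fun x => t - x ∈ H).card
        = ∑ x ∈ A, (S.filter fun t => t - x ∈ H).card := by
    intro S A
    simp only [card_filter]
    exact Finset.sum_comm
  have hub : ∀ (S : Finset G) (x : G), (S.filter fun t => t - x ∈ H).card ≤ H.card := by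
    intro S x
    apply Finset.card_le_card_of_injOn (fun t => t - x)
    · intro t ht; exact (mem_filter.mp ht).2
    · intro a _ b _ hab; simpa using hab
  set K : ℝ := 2 / c * n ^ ε with hK
  have hK0 : 0 < K := by positivity
  set B : Finset G := ((X + H) ∩ Δ).filter (fun t => K ≤ (r t : ℝ)) with hB
  set D : Finset G := ((X + H) ∩ Δ).filter (fun t => ¬ K ≤ (r t : ℝ)) with hD
  -- total representation bound
  have htot : ∑ t ∈ X + H, r t ≤ X.card * H.card := by
    rw [hr]
    rw [swap (X + H) X]
    calc ∑ x ∈ X, ((X + H).filter fun t => t - x ∈ H).card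
        ≤ ∑ x ∈ X, H.card := Finset.sum_le_sum fun x _ => hub _ x
      _ = X.card * H.card := by rw [Finset.sum_const, smul_eq_mul]
  -- bound on |B|
  have hBcard : (B.card : ℝ) * K ≤ (X.card : ℝ) * n := by
    have h1 : (B.card : ℝ) * K ≤ ∑ t ∈ B, (r t : ℝ) := by
      have := Finset.card_nsmul_le_sum B (fun t => (r t : ℝ)) K
        (fun t ht => (mem_filter.mp ht).2)
      simpa [nsmul_eq_mul] using this
    have h2 : ∑ t ∈ B, (r t : ℝ) ≤ ∑ t ∈ X + H, (r t : ℝ) := by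
      apply Finset.sum_le_sum_of_subset_of_nonneg
      · intro t ht
        exact Finset.mem_of_mem_inter_left ((Finset.mem_filter.mp ht).1)
      · intro t _ _; positivity
    have h3 : (∑ t ∈ X + H, (r t : ℝ)) ≤ (X.card : ℝ) * n := by
      rw [hn]
      push_cast [← Nat.cast_sum]
      exact_mod_cast htot
    linarith
  -- rpow arithmetic
  have hsplit1 : n ^ (1 - ε) * n ^ ε = n := by
    rw [← Real.rpow_add hn0, show (1 - ε) + ε = 1 by ring, Real.rpow_one]
  have hsplit2 : n ^ (1 - 2 * ε) * n ^ ε = n ^ (1 - ε) := by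
    rw [← Real.rpow_add hn0, show (1 - 2 * ε) + ε = 1 - ε by ring]
  have hsplit3 : n ^ (-ε) * n = n ^ (1 - ε) := by
    rw [show (1 - ε) = -ε + 1 by ring, Real.rpow_add hn0, Real.rpow_one]
  have h4 : (B.card : ℝ) * (2 * n ^ ε) ≤ (X.card : ℝ) * n * c := by
    have h5 := mul_le_mul_of_nonneg_right hBcard hc.le
    have h6 : (B.card : ℝ) * K * c = (B.card : ℝ) * (2 * n ^ ε) := by
      rw [hK]; field_simp
    linarith [h5, h6]
  have hBle : 2 * (B.card : ℝ) ≤ c * (X.card : ℝ) * n ^ (1 - ε) := by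
    have h7 : (2 * (B.card : ℝ)) * n ^ ε ≤ (c * (X.card : ℝ) * n ^ (1 - ε)) * n ^ ε := by
      have e : (c * (X.card : ℝ) * n ^ (1 - ε)) * n ^ ε = (X.card : ℝ) * n * c := by
        linear_combination c * (X.card : ℝ) * hsplit1
      rw [e]; linarith [h4]
    exact le_of_mul_le_mul_right h7 hPε
  have hsum : B.card + D.card = ((X + H) ∩ Δ).card := by
    rw [hB, hD]; exact Finset.card_filter_add_card_filter_not _
  have hDcard : c / 2 * (X.card : ℝ) * n ^ (1 - ε) ≤ (D.card : ℝ) := by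
    have hcast : (B.card : ℝ) + (D.card : ℝ) = (((X + H) ∩ Δ).card : ℝ) := by
      exact_mod_cast hsum
    linarith [h, hcast, hBle]
  -- the degree function
  set d : G → ℕ := fun x => (D.filter fun t => t - x ∈ H).card with hd
  have hrpos : ∀ t ∈ D, 1 ≤ r t := by
    intro t ht
    have htXH : t ∈ X + H := Finset.mem_of_mem_inter_left (Finset.mem_filter.mp ht).1
    rw [Finset.mem_add] at htXH
    obtain ⟨x, hx, hh, hhH, hxh⟩ := htXH
    refine Finset.card_pos.mpr ⟨x, Finset.mem_filter.mpr ⟨hx, ?_⟩⟩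
    rw [← hxh]
    simpa using hhH
  have hsumd : D.card ≤ ∑ x ∈ X, d x := by
    calc D.card = ∑ t ∈ D, 1 := by rw [Finset.sum_const, smul_eq_mul, mul_one]
      _ ≤ ∑ t ∈ D, r t := Finset.sum_le_sum hrpos
      _ = ∑ x ∈ X, d x := swap D X
  -- selection
  set X' : Finset G := X.filter (fun x => c / 4 * n ^ (1 - ε) ≤ (d x : ℝ)) with hX'
  refine ⟨X', Finset.filter_subset _ _, ?_, ?_⟩
  · -- size of X'
    have hsplitX := Finset.sum_filter_add_sum_filter_not X
      (fun x => c / 4 * n ^ (1 - ε) ≤ (d x : ℝ)) (fun x => (d x : ℝ))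
    have h8 : ∑ x ∈ X.filter (fun x => ¬ c / 4 * n ^ (1 - ε) ≤ (d x : ℝ)), (d x : ℝ)
        ≤ (X.card : ℝ) * (c / 4 * n ^ (1 - ε)) := by
      calc ∑ x ∈ X.filter (fun x => ¬ c / 4 * n ^ (1 - ε) ≤ (d x : ℝ)), (d x : ℝ)
          ≤ ∑ x ∈ X.filter (fun x => ¬ c / 4 * n ^ (1 - ε) ≤ (d x : ℝ)),
              (c / 4 * n ^ (1 - ε)) := by
            refine Finset.sum_le_sum fun x hx => ?_
            exact le_of_lt (not_le.mp (Finset.mem_filter.mp hx).2)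
        _ = ((X.filter (fun x => ¬ c / 4 * n ^ (1 - ε) ≤ (d x : ℝ))).card : ℝ)
              * (c / 4 * n ^ (1 - ε)) := by
            rw [Finset.sum_const, nsmul_eq_mul]
        _ ≤ (X.card : ℝ) * (c / 4 * n ^ (1 - ε)) := by
            have := Finset.card_filter_le X (fun x => ¬ c / 4 * n ^ (1 - ε) ≤ (d x : ℝ))
            have hnn : (0:ℝ) ≤ c / 4 * n ^ (1 - ε) := by positivity
            exact mul_le_mul_of_nonneg_right (by exact_mod_cast this) hnn
    have h9 : ∑ x ∈ X', (d x : ℝ) ≤ (X'.card : ℝ) * n := by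
      calc ∑ x ∈ X', (d x : ℝ) ≤ ∑ x ∈ X', n := by
            refine Finset.sum_le_sum fun x hx => ?_
            rw [hn]
            exact_mod_cast hub D x
        _ = (X'.card : ℝ) * n := by rw [Finset.sum_const, nsmul_eq_mul]
    have h10 : (D.card : ℝ) ≤ ∑ x ∈ X, (d x : ℝ) := by
      rw [← Nat.cast_sum]
      exact_mod_cast hsumd
    have h11 : (c / 4 * (X.card : ℝ) * n ^ (-ε)) * n ≤ (X'.card : ℝ) * n := by
      have e : (c / 4 * (X.card : ℝ) * n ^ (-ε)) * n = c / 4 * (X.card : ℝ) * n ^ (1 - ε) := by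
        linear_combination (c / 4 * (X.card : ℝ)) * hsplit3
      rw [e]
      linarith [hsplitX, h8, h9, h10, hDcard]
    exact le_of_mul_le_mul_right h11 hn0
  · -- every nonempty Y ⊆ X'
    intro Y hYX' hYne
    have hYX : Y ⊆ X := hYX'.trans (Finset.filter_subset _ _)
    set rY : G → ℕ := fun t => (Y.filter fun x => t - x ∈ H).card with hrY
    set D' : Finset G := D.filter (fun t => t ∈ Y + H) with hD'
    have h11 : (Y.card : ℝ) * (c / 4 * n ^ (1 - ε)) ≤ ∑ x ∈ Y, (d x : ℝ) := by
      calc (Y.card : ℝ) * (c / 4 * n ^ (1 - ε)) = ∑ x ∈ Y, (c / 4 * n ^ (1 - ε)) := by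
            rw [Finset.sum_const, nsmul_eq_mul]
        _ ≤ ∑ x ∈ Y, (d x : ℝ) := by
            refine Finset.sum_le_sum fun x hx => ?_
            exact (Finset.mem_filter.mp (hYX' hx)).2
    have h12 : ∑ x ∈ Y, d x = ∑ t ∈ D', rY t := by
      rw [(swap D Y).symm, hD']
      refine (Finset.sum_filter_of_ne ?_).symm
      intro t ht hne
      have : (Y.filter fun x => t - x ∈ H).Nonempty := Finset.card_pos.mp (Nat.pos_of_ne_zero hne)
      obtain ⟨x, hx⟩ := this
      rw [Finset.mem_filter] at hx
      rw [Finset.mem_add]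
      exact ⟨x, hx.1, t - x, hx.2, by abel⟩
    have h13 : ∑ t ∈ D', (rY t : ℝ) ≤ (D'.card : ℝ) * K := by
      calc ∑ t ∈ D', (rY t : ℝ) ≤ ∑ t ∈ D', K := by
            refine Finset.sum_le_sum fun t ht => ?_
            have htD : t ∈ D := Finset.mem_of_mem_filter t ht
            have hlt : (r t : ℝ) < K := not_le.mp (Finset.mem_filter.mp htD).2
            have hle : rY t ≤ r t :=
              Finset.card_le_card (Finset.filter_subset_filter _ hYX)
            calc (rY t : ℝ) ≤ (r t : ℝ) := by exact_mod_cast hle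
              _ ≤ K := hlt.le
        _ = (D'.card : ℝ) * K := by rw [Finset.sum_const, nsmul_eq_mul]
    have h14 : (D'.card : ℝ) ≤ (((Y + H) ∩ Δ).card : ℝ) := by
      have hsub : D' ⊆ (Y + H) ∩ Δ := by
        intro t ht
        rw [Finset.mem_filter] at ht
        have htΔ : t ∈ Δ := Finset.mem_of_mem_inter_right (Finset.mem_filter.mp ht.1).1
        exact Finset.mem_inter.mpr ⟨ht.2, htΔ⟩
      exact_mod_cast Finset.card_le_card hsub
    have h15 : (∑ x ∈ Y, (d x : ℝ)) = ∑ t ∈ D', (rY t : ℝ) := by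
      rw [← Nat.cast_sum, ← Nat.cast_sum]
      exact_mod_cast h12
    have h16 : (c ^ 2 / 8 * (Y.card : ℝ) * n ^ (1 - 2 * ε)) * K
        ≤ (((Y + H) ∩ Δ).card : ℝ) * K := by
      have e : (c ^ 2 / 8 * (Y.card : ℝ) * n ^ (1 - 2 * ε)) * K
          = (Y.card : ℝ) * (c / 4 * n ^ (1 - ε)) := by
        rw [hK]
        exact stmt6_aux hc.ne' hsplit2
      rw [e]
      have := mul_le_mul_of_nonneg_right h14 hK0.le
      linarith [h11, h13, h15, this]
    exact le_of_mul_le_mul_right h16 hK0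
end

section
/- Lower bound for Bohr set size: for any Γ ⊆ ℤ/Nℤ and radius γ ∈ (0, 1/2], the Bohr set B(Γ, γ) = {x ∈ ℤ/Nℤ : ‖tx/N‖ ≤ γ for all t ∈ Γ} satisfies |B(Γ, γ)| ≥ γ^{|Γ|}·N, where ‖·‖ denotes distance to the nearest integer. -/
open Finset

/-- Distance from a real number to the nearest integer. -/
noncomputable def distInt (r : ℝ) : ℝ := |r - round r|

open scoped Classical in
/-- The Bohr set `B(Γ, γ) = {x ∈ ℤ/Nℤ : ‖tx/N‖ ≤ γ for all t ∈ Γ}`. -/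
noncomputable def bohr {N : ℕ} [NeZero N] (Γ : Finset (ZMod N)) (γ : ℝ) : Finset (ZMod N) :=
  Finset.univ.filter fun x => ∀ t ∈ Γ, distInt (((t * x).val : ℝ) / N) ≤ γ

/-!
Let `I = {0, …, ⌈γN⌉ - 1} ⊆ ℤ/Nℤ`. As `k` ranges over `(ℤ/Nℤ)^Γ`, each `x` satisfies
`t x - k_t ∈ I` for all `t ∈ Γ` for exactly `|I|^|Γ|` values of `k`, so by pigeonhole some `k` is
served by at least `N (|I| / N)^|Γ| ≥ γ^|Γ| N` elements `x`. Fixing one of them, `y`, the map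
`x ↦ x - y` sends these into the Bohr set, because every element of `I - I` is within `γN` of `0`.
-/

open scoped Pointwise

section Pigeonhole

variable {ι H : Type*} [Fintype ι] [DecidableEq ι] [AddCommGroup H] [Fintype H] [DecidableEq H]

lemma card_filter_forall_sub_mem (I : Finset H) (c : ι → H) :
    #{k : ι → H | ∀ i, c i - k i ∈ I} = #I ^ Fintype.card ι := by
  calc _ = #(Fintype.piFinset fun _ : ι => I) :=
        card_equiv (Equiv.subLeft c) fun k => by simp [Fintype.mem_piFinset]
    _ = _ := by simp [Fintype.card_piFinset]

lemma sum_card_filter_forall_sub_mem {X : Type*} [Fintype X] (f : ι → X → H) (I : Finset H) :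
    ∑ k : ι → H, #{x | ∀ i, f i x - k i ∈ I} = Fintype.card X * #I ^ Fintype.card ι := by
  simp only [card_filter]
  rw [sum_comm]
  simp only [← card_filter, card_filter_forall_sub_mem, sum_const, card_univ, smul_eq_mul]

lemma exists_card_mul_pow_le_card_filter_forall_sub_mem {X : Type*} [Fintype X]
    (f : ι → X → H) (I : Finset H) :
    ∃ k : ι → H, Fintype.card X * #I ^ Fintype.card ι ≤
      #{x | ∀ i, f i x - k i ∈ I} * Fintype.card H ^ Fintype.card ι := by
  obtain ⟨k, -, hk⟩ := exists_le_of_sum_le univ_nonempty <| show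
      ∑ _ : ι → H, Fintype.card X * #I ^ Fintype.card ι ≤
        ∑ k : ι → H, #{x | ∀ i, f i x - k i ∈ I} * Fintype.card H ^ Fintype.card ι by
    rw [sum_const, card_univ, Fintype.card_fun, smul_eq_mul, ← sum_mul,
      sum_card_filter_forall_sub_mem, mul_comm]
  exact ⟨k, hk⟩

end Pigeonhole

theorem card_mul_pow_le_card_filter_forall_mem_sub {G H ι : Type*} [AddCommGroup G] [Fintype G]
    [DecidableEq G] [AddCommGroup H] [Fintype H] [DecidableEq H] [Fintype ι] [DecidableEq ι]
    (χ : ι → G →+ H) (I : Finset H) :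
    Fintype.card G * #I ^ Fintype.card ι ≤
      #{x | ∀ i, χ i x ∈ I - I} * Fintype.card H ^ Fintype.card ι := by
  obtain ⟨k, hk⟩ := exists_card_mul_pow_le_card_filter_forall_sub_mem (fun i => ⇑(χ i)) I
  set S : Finset G := {x | ∀ i, χ i x - k i ∈ I}
  refine hk.trans (Nat.mul_le_mul_right _ ?_)
  obtain hS | ⟨y, hy⟩ := S.eq_empty_or_nonempty
  · simp [hS]
  refine card_le_card_of_injOn (· - y) (fun x hx => ?_) fun _ _ _ _ h => sub_left_injective h
  simp only [S, coe_filter, mem_filter, Set.mem_ofPred_eq, mem_univ, true_and] at hx hy ⊢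
  intro i
  rw [map_sub, show χ i x - χ i y = (χ i x - k i) - (χ i y - k i) by abel]
  exact sub_mem_sub (hx i) (hy i)

lemma distInt_val_intCast_div_le {N : ℕ} [NeZero N] (a : ℤ) :
    distInt (((a : ZMod N).val : ℝ) / N) ≤ |(a : ℝ)| / N := by
  have hN : (0 : ℝ) < N := by exact_mod_cast Nat.pos_of_ne_zero (NeZero.ne N)
  have hval : ((a : ZMod N).val : ℝ) = a - N * (a / N : ℤ) := by
    rw [← Int.cast_natCast, ZMod.val_intCast, Int.emod_def]
    push_cast
    ring
  calc distInt (((a : ZMod N).val : ℝ) / N) ≤ |((a : ZMod N).val : ℝ) / N - ((-(a / N) : ℤ) : ℝ)| :=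
        round_le _ _
    _ = |(a : ℝ)| / N := by
        rw [hval, show ((a : ℝ) - N * (a / N : ℤ)) / N - ((-(a / N) : ℤ) : ℝ) = a / N by
          push_cast; field_simp; ring, abs_div, abs_of_pos hN]

def arc (N m : ℕ) : Finset (ZMod N) := (range m).image (↑)

lemma card_arc {N m : ℕ} (hm : m ≤ N) : #(arc N m) = m := by
  rw [arc, card_image_of_injOn, card_range]
  intro i hi j hj hij
  simp only [coe_range, Set.mem_Iio] at hi hj
  rw [← ZMod.val_natCast_of_lt (hi.trans_le hm), ← ZMod.val_natCast_of_lt (hj.trans_le hm), hij]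

lemma distInt_val_div_le_of_mem_arc_sub_arc {N : ℕ} [NeZero N] {γ : ℝ} {c : ZMod N}
    (hc : c ∈ arc N ⌈γ * N⌉₊ - arc N ⌈γ * N⌉₊) : distInt ((c.val : ℝ) / N) ≤ γ := by
  have hN : (0 : ℝ) < N := by exact_mod_cast Nat.pos_of_ne_zero (NeZero.ne N)
  obtain ⟨a, ha, b, hb, rfl⟩ := mem_sub.1 hc
  obtain ⟨i, hi, rfl⟩ := mem_image.1 ha
  obtain ⟨j, hj, rfl⟩ := mem_image.1 hb
  rw [mem_range, Nat.lt_ceil] at hi hj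
  have hij : ((i : ZMod N) - j) = ((i - j : ℤ) : ZMod N) := by push_cast; rfl
  rw [hij]
  refine (distInt_val_intCast_div_le _).trans ?_
  rw [div_le_iff₀ hN, abs_le]
  push_cast
  constructor <;> linarith [(i.cast_nonneg : (0 : ℝ) ≤ i), (j.cast_nonneg : (0 : ℝ) ≤ j)]

theorem stmt8 {N : ℕ} [NeZero N] (Γ : Finset (ZMod N)) (γ : ℝ) (hγ0 : 0 < γ)
    (hγ : γ ≤ 1 / 2) :
    γ ^ Γ.card * N ≤ ((bohr Γ γ).card : ℝ) := by
  have hN : (0 : ℝ) < N := by exact_mod_cast Nat.pos_of_ne_zero (NeZero.ne N)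
  set m := ⌈γ * N⌉₊
  have hmN : m ≤ N := Nat.ceil_le.2 (by nlinarith)
  have hbohr : #{x | ∀ t : Γ, AddMonoidHom.mulLeft (t : ZMod N) x ∈ arc N m - arc N m}
      ≤ #(bohr Γ γ) := by
    refine card_le_card fun x hx => ?_
    simp only [bohr, mem_filter, mem_univ, true_and, Subtype.forall] at hx ⊢
    exact fun t ht => distInt_val_div_le_of_mem_arc_sub_arc (hx t ht)
  have hcount := card_mul_pow_le_card_filter_forall_mem_sub
    (fun t : Γ => AddMonoidHom.mulLeft (t : ZMod N)) (arc N m)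
  rw [ZMod.card, card_arc hmN, Fintype.card_coe] at hcount
  have hcount' : (N : ℝ) * m ^ #Γ ≤ #(bohr Γ γ) * N ^ #Γ := by
    exact_mod_cast hcount.trans (Nat.mul_le_mul_right _ hbohr)
  refine le_of_mul_le_mul_right ?_ (pow_pos hN #Γ)
  calc γ ^ #Γ * N * N ^ #Γ = N * (γ * N) ^ #Γ := by ring
    _ ≤ N * m ^ #Γ := by gcongr; exact Nat.le_ceil _
    _ ≤ #(bohr Γ γ) * N ^ #Γ := hcount'
end

section
/- Existence of regular Bohr sets: for every Bohr set B(Γ, γ) in ℤ/Nℤ there exists γ' with γ/2 ≤ γ' ≤ γ such that B(Γ, γ') is regular, i.e., for every η with |η| ≤ 1/(100|Γ|) one has (1 − 100|Γ||η|)·|B(Γ,γ')| ≤ |B(Γ, (1+η)γ')| ≤ (1 + 100|Γ||η|)·|B(Γ,γ')|. -/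
open Finset

/-!
Let `F ρ = log₂ |B(Γ, ρ)|`, a nondecreasing function of `ρ`. Covering `B(Γ, 3ρ)` by `7 ^ |Γ|`
translates of `B(Γ, ρ)` shows that `F` grows by at most `3 |Γ|` on `[γ/2 - δ, γ + δ]`, where
`δ = γ / (100 |Γ|)`. A Vitali covering argument turns this bound on the average slope into a point
`a ∈ [γ/2, γ]` with `F (a + u) - F (a - u) ≤ 100 |Γ| u / γ` for all `u ≤ δ`, and exponentiating
with `2 ^ x ≤ 1 + x` on `[0, 1]` shows that `B(Γ, a)` is regular.
-/

open Real

lemma Monotone.sum_sub_le_of_pairwiseDisjoint {ι : Type*} {G : ℝ → ℝ} (hG : Monotone G)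
    (s : Finset ι) {y z : ι → ℝ} {C D : ℝ} (hCD : C ≤ D) (hy : ∀ i ∈ s, C ≤ y i)
    (hyz : ∀ i ∈ s, y i ≤ z i) (hz : ∀ i ∈ s, z i ≤ D)
    (hdisj : (s : Set ι).PairwiseDisjoint fun i => Set.Icc (y i) (z i)) :
    ∑ i ∈ s, (G (z i) - G (y i)) ≤ G D - G C := by
  classical
  induction s using Finset.induction_on_max_value z generalizing D with
  | empty => simpa using hG hCD
  | insert a s ha hmax ih =>
    have hs : ∀ i ∈ s, z i < y a := fun i hi => by
      by_contra! h
      have hne : a ≠ i := fun h' => ha (h' ▸ hi)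
      exact Set.disjoint_left.1 (hdisj (mem_insert_self a s) (mem_insert_of_mem hi) hne)
        ⟨h, hmax i hi⟩ ⟨hyz i (mem_insert_of_mem hi), le_rfl⟩
    have hrest := ih (hy a (mem_insert_self a s)) (fun i hi => hy i (mem_insert_of_mem hi))
      (fun i hi => hyz i (mem_insert_of_mem hi)) (fun i hi => (hs i hi).le)
      (hdisj.subset (by simp))
    rw [sum_insert ha]
    linarith [hG (hz a (mem_insert_self a s))]

lemma sub_le_sum_of_Icc_subset_biUnion_closedBall {ι : Type*} (s : Finset ι) {x r : ι → ℝ}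
    (hr : ∀ i ∈ s, 0 ≤ r i) {c d : ℝ}
    (hcover : Set.Icc c d ⊆ ⋃ i ∈ s, Metric.closedBall (x i) (r i)) :
    d - c ≤ ∑ i ∈ s, 2 * r i := by
  have h := (MeasureTheory.measure_mono hcover).trans
    (MeasureTheory.measure_biUnion_finset_le (μ := MeasureTheory.volume) s _)
  simp only [Real.volume_Icc, Real.volume_closedBall] at h
  rwa [← ENNReal.ofReal_sum_of_nonneg (fun i hi => by linarith [hr i hi]),
    ENNReal.ofReal_le_ofReal_iff (sum_nonneg fun i hi => by linarith [hr i hi])] at h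

lemma Monotone.exists_forall_sub_le_mul {G : ℝ → ℝ} (hG : Monotone G) {c d δ l : ℝ} (hcd : c < d)
    (hl : 0 ≤ l) (hgrowth : G (d + δ) - G (c - δ) ≤ l * (d - c) / 8) :
    ∃ a ∈ Set.Icc c d, ∀ u, 0 ≤ u → u ≤ δ → G (a + u) - G (a - u) ≤ l * u := by
  -- Otherwise every `a ∈ [c, d]` carries an interval `[a - U a, a + U a]` of excess growth; a
  -- finite subcover and Vitali's covering lemma give disjoint such intervals of total length at
  -- least `(d - c) / 4`, whose total growth is then too large.
  by_contra! hbad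
  choose U hU0 hUδ hU using fun a : Set.Icc c d => hbad a a.2
  have hUpos : ∀ a, 0 < U a := fun a => (hU0 a).lt_of_ne fun h => by simpa [← h] using hU a
  have hδ : 0 ≤ δ := (hU0 ⟨c, le_rfl, hcd.le⟩).trans (hUδ _)
  obtain ⟨T, hT⟩ := isCompact_Icc.elim_finite_subcover
    (fun a : Set.Icc c d => Metric.ball (a : ℝ) (U a)) (fun _ => Metric.isOpen_ball)
    fun b hb => Set.mem_iUnion.2 ⟨⟨b, hb⟩, Metric.mem_ball_self (hUpos _)⟩
  obtain ⟨u, huT, hdisj, henl⟩ := Vitali.exists_disjoint_subfamily_covering_enlargement_closedBall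
    (T : Set (Set.Icc c d)) (fun a => (a : ℝ)) U δ (fun a _ => hUδ a) 4 (by norm_num)
  have hu : u.Finite := T.finite_toSet.subset huT
  set S := hu.toFinset
  have hcover : Set.Icc c d ⊆ ⋃ b ∈ S, Metric.closedBall (b : ℝ) (4 * U b) := by
    intro x hx
    obtain ⟨a, haT, hxa⟩ := Set.mem_iUnion₂.1 (hT hx)
    obtain ⟨b, hbu, hab⟩ := henl a haT
    exact Set.mem_biUnion (hu.mem_toFinset.2 hbu) (hab (Metric.ball_subset_closedBall hxa))
  have hlength : d - c ≤ 8 * ∑ b ∈ S, U b :=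
    (sub_le_sum_of_Icc_subset_biUnion_closedBall S (fun b _ => by linarith [hU0 b])
      hcover).trans_eq (by rw [mul_sum]; exact sum_congr rfl fun _ _ => by ring)
  have hS : S.Nonempty := by
    by_contra! h
    simp only [h, sum_empty] at hlength
    linarith
  have hsum : ∑ b ∈ S, (G (b + U b) - G (b - U b)) ≤ G (d + δ) - G (c - δ) := by
    refine hG.sum_sub_le_of_pairwiseDisjoint S (by linarith) (fun b _ => by linarith [b.2.1, hUδ b])
      (fun b _ => by linarith [hUpos b]) (fun b _ => by linarith [b.2.2, hUδ b]) ?_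
    simpa [S, Real.closedBall_eq_Icc] using hdisj
  have : l * (d - c) / 8 < l * (d - c) / 8 := calc
    l * (d - c) / 8 ≤ l * ∑ b ∈ S, U b := by nlinarith
    _ = ∑ b ∈ S, l * U b := mul_sum _ _ _
    _ < ∑ b ∈ S, (G (b + U b) - G (b - U b)) := sum_lt_sum_of_nonempty hS fun b _ => hU b
    _ ≤ l * (d - c) / 8 := hsum.trans hgrowth
  exact lt_irrefl _ this

lemma le_one_add_mul_of_logb_sub_le {p q x : ℝ} (hp : 0 < p) (hpq : p ≤ q)
    (h : logb 2 q - logb 2 p ≤ x) (hx : x ≤ 1) : q ≤ (1 + x) * p := by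
  have hx0 : 0 ≤ x := by linarith [logb_le_logb_of_le one_lt_two hp hpq]
  have hq : q ≤ 2 ^ x * p := by
    calc q = 2 ^ (logb 2 q - logb 2 p) * p := by
          rw [Real.rpow_sub two_pos, Real.rpow_logb two_pos (by norm_num) (hp.trans_le hpq),
            Real.rpow_logb two_pos (by norm_num) hp, div_mul_cancel₀ _ hp.ne']
      _ ≤ 2 ^ x * p := by gcongr; norm_num
  have hbern : (2 : ℝ) ^ x ≤ 1 + x := by
    simpa [one_add_one_eq_two] using rpow_one_add_le_one_add_mul_self (s := 1) (by norm_num) hx0 hx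
  nlinarith

lemma Monotone.le_mul_and_le_mul_of_logb_sub_le {g : ℝ → ℝ} (hg : Monotone g) {a u x r : ℝ}
    (hpos : 0 < g (a - u)) (hx : x ≤ 1)
    (h : logb 2 (g (a + u)) - logb 2 (g (a - u)) ≤ x) (hr : r ∈ Set.Icc (a - u) (a + u)) :
    (1 - x) * g a ≤ g r ∧ g r ≤ (1 + x) * g a := by
  have hu : 0 ≤ u := by linarith [hr.1, hr.2]
  have hratio := le_one_add_mul_of_logb_sub_le hpos (hg (by linarith)) h hx
  have hlow : g (a - u) ≤ g a := hg (by linarith)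
  have hhigh : g a ≤ g (a + u) := hg (by linarith)
  constructor
  · nlinarith [hg hr.1]
  · nlinarith [hg hr.2]

lemma distInt_add_intCast (r : ℝ) (n : ℤ) : distInt (r + n) = distInt r := by
  rw [distInt, distInt, round_add_intCast, Int.cast_add, add_sub_add_right_eq_sub]

lemma distInt_sub_le (r s : ℝ) : distInt (r - s) ≤ |(r - round r) - (s - round s)| := by
  have h : r - s = ((r - round r) - (s - round s)) + ((round r - round s : ℤ) : ℝ) := by
    push_cast; ring
  rw [h, distInt_add_intCast]
  simpa [distInt] using round_le ((r - round r) - (s - round s)) 0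

section Bohr

variable {N : ℕ} [NeZero N]

lemma distInt_val_sub_div (u v : ZMod N) :
    distInt (((u - v).val : ℝ) / N) = distInt ((u.val : ℝ) / N - (v.val : ℝ) / N) := by
  have hcast : (((u - v).val : ℤ) : ZMod N) = ((u.val - v.val : ℤ) : ZMod N) := by
    push_cast
    simp only [ZMod.natCast_zmod_val]
  obtain ⟨m, hm⟩ := (ZMod.intCast_eq_intCast_iff_dvd_sub _ _ _).1 hcast
  have hval : ((u - v).val : ℝ) = u.val - v.val - N * m := by
    have := congrArg (Int.cast : ℤ → ℝ) hm
    push_cast at this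
    linarith
  have hN : (N : ℝ) ≠ 0 := Nat.cast_ne_zero.mpr (NeZero.ne N)
  rw [hval, ← distInt_add_intCast _ m]
  congr 1
  field_simp
  ring

noncomputable def phase (w : ZMod N) : ℝ := (w.val : ℝ) / N - round ((w.val : ℝ) / N)

lemma distInt_val_sub_div_le (u v : ZMod N) :
    distInt (((u - v).val : ℝ) / N) ≤ |phase u - phase v| := by
  rw [distInt_val_sub_div]
  exact distInt_sub_le _ _

lemma mem_bohr {Γ : Finset (ZMod N)} {γ : ℝ} {x : ZMod N} :
    x ∈ bohr Γ γ ↔ ∀ t ∈ Γ, distInt (((t * x).val : ℝ) / N) ≤ γ := by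
  classical
  simp [bohr]

lemma bohr_mono (Γ : Finset (ZMod N)) : Monotone (bohr Γ) :=
  fun _ _ h _ hx => mem_bohr.2 fun t ht => (mem_bohr.1 hx t ht).trans h

lemma zero_mem_bohr (Γ : Finset (ZMod N)) {γ : ℝ} (h : 0 ≤ γ) : 0 ∈ bohr Γ γ :=
  mem_bohr.2 fun t _ => by simpa [distInt] using h

lemma card_bohr_pos (Γ : Finset (ZMod N)) {γ : ℝ} (h : 0 ≤ γ) : 0 < #(bohr Γ γ) :=
  card_pos.2 ⟨0, zero_mem_bohr Γ h⟩

lemma sub_mem_bohr_of_floor_eq {Γ : Finset (ZMod N)} {ρ : ℝ} (hρ : 0 < ρ) {x y : ZMod N}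
    (h : ∀ t ∈ Γ, ⌊phase (t * x) / ρ⌋ = ⌊phase (t * y) / ρ⌋) : x - y ∈ bohr Γ ρ := by
  refine mem_bohr.2 fun t ht => ?_
  have hlt : |phase (t * x) / ρ - phase (t * y) / ρ| < 1 :=
    Int.abs_sub_lt_one_of_floor_eq_floor (h t ht)
  rw [← sub_div, abs_div, abs_of_pos hρ, div_lt_one hρ] at hlt
  rw [mul_sub]
  exact (distInt_val_sub_div_le _ _).trans hlt.le

/-- Sorting the points of `B(Γ, 3ρ)` by the boxes of side `ρ` containing `(phase (t x))_{t ∈ Γ}`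
gives at most `7 ^ |Γ|` classes, each a subset of a translate of `B(Γ, ρ)`. -/
lemma card_bohr_three_mul_le (Γ : Finset (ZMod N)) {ρ : ℝ} (hρ : 0 < ρ) :
    #(bohr Γ (3 * ρ)) ≤ 7 ^ #Γ * #(bohr Γ ρ) := by
  classical
  let box : ZMod N → Γ → ℤ := fun x t => ⌊phase ((t : ZMod N) * x) / ρ⌋
  have hbox : ∀ x ∈ bohr Γ (3 * ρ), box x ∈ Fintype.piFinset fun _ : Γ => Icc (-3 : ℤ) 3 := by
    intro x hx
    refine Fintype.mem_piFinset.2 fun t => mem_Icc.2 ?_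
    have h3 : |phase ((t : ZMod N) * x) / ρ| ≤ 3 := by
      rw [abs_div, abs_of_pos hρ, div_le_iff₀ hρ]
      exact mem_bohr.1 hx t t.2
    rw [abs_le] at h3
    exact ⟨Int.le_floor.2 (by exact_mod_cast h3.1), Int.floor_le_iff.2 (by push_cast; linarith)⟩
  have himage : #((bohr Γ (3 * ρ)).image box) ≤ 7 ^ #Γ := by
    calc #((bohr Γ (3 * ρ)).image box) ≤ #(Fintype.piFinset fun _ : Γ => Icc (-3 : ℤ) 3) :=
          card_le_card fun v hv => by
            obtain ⟨x, hx, rfl⟩ := mem_image.1 hv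
            exact hbox x hx
      _ = 7 ^ #Γ := by simp
  have hfiber : ∀ v ∈ (bohr Γ (3 * ρ)).image box,
      #{x ∈ bohr Γ (3 * ρ) | box x = v} ≤ #(bohr Γ ρ) := by
    intro v hv
    obtain ⟨x₀, -, hx₀⟩ := mem_image.1 hv
    refine card_le_card_of_injOn (· - x₀) (fun y hy => ?_) (fun _ _ _ _ h => sub_left_injective h)
    have hy : box y = box x₀ := (mem_filter.1 hy).2.trans hx₀.symm
    exact sub_mem_bohr_of_floor_eq hρ fun t ht => congrFun hy ⟨t, ht⟩
  calc #(bohr Γ (3 * ρ)) ≤ #(bohr Γ ρ) * #((bohr Γ (3 * ρ)).image box) :=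
        card_le_mul_card_image _ _ hfiber
    _ ≤ 7 ^ #Γ * #(bohr Γ ρ) := by rw [mul_comm]; exact Nat.mul_le_mul_right _ himage

lemma monotone_card_bohr (Γ : Finset (ZMod N)) : Monotone fun γ => (#(bohr Γ γ) : ℝ) :=
  fun _ _ h => Nat.cast_le.2 (card_le_card (bohr_mono Γ h))

lemma monotone_logb_card_bohr (Γ : Finset (ZMod N)) :
    Monotone fun γ => logb 2 (#(bohr Γ γ) : ℝ) := by
  intro γ γ' h
  rcases (#(bohr Γ γ)).eq_zero_or_pos with h0 | hpos
  · simpa [h0, logb] using div_nonneg (Real.log_natCast_nonneg _) (Real.log_nonneg one_le_two)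
  · exact logb_le_logb_of_le one_lt_two (by exact_mod_cast hpos)
      (monotone_card_bohr Γ h)

lemma logb_card_bohr_sub_le (Γ : Finset (ZMod N)) {ρ β : ℝ} (hρ : 0 < ρ) (h : β ≤ 3 * ρ) :
    logb 2 (#(bohr Γ β) : ℝ) - logb 2 (#(bohr Γ ρ) : ℝ) ≤ 3 * #Γ := by
  have hcard : (#(bohr Γ (3 * ρ)) : ℝ) ≤ 2 ^ (3 * (#Γ : ℝ)) * #(bohr Γ ρ) := by
    rw [Real.rpow_mul two_pos.le, show (2 : ℝ) ^ (3 : ℝ) = 8 by norm_num, Real.rpow_natCast]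
    exact_mod_cast (card_bohr_three_mul_le Γ hρ).trans
      (Nat.mul_le_mul_right _ (Nat.pow_le_pow_left (by norm_num) _))
  have hρpos : (0 : ℝ) < #(bohr Γ ρ) := by exact_mod_cast card_bohr_pos Γ hρ.le
  calc logb 2 (#(bohr Γ β) : ℝ) - logb 2 (#(bohr Γ ρ) : ℝ)
      ≤ logb 2 (#(bohr Γ (3 * ρ)) : ℝ) - logb 2 (#(bohr Γ ρ) : ℝ) := by
        linarith [monotone_logb_card_bohr Γ h]
    _ ≤ logb 2 (2 ^ (3 * (#Γ : ℝ)) * #(bohr Γ ρ)) - logb 2 (#(bohr Γ ρ) : ℝ) := by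
        gcongr
        · norm_num
        · exact_mod_cast card_bohr_pos Γ (by positivity)
    _ = 3 * #Γ := by
      rw [logb_mul (by positivity) hρpos.ne', logb_rpow two_pos (by norm_num)]
      ring

end Bohr

theorem stmt10_general {N : ℕ} [NeZero N] (Γ : Finset (ZMod N)) (γ : ℝ) (hγ0 : 0 < γ) :
    ∃ γ' : ℝ, γ / 2 ≤ γ' ∧ γ' ≤ γ ∧
      ∀ η : ℝ, |η| ≤ 1 / (100 * Γ.card) →
        (1 - 100 * Γ.card * |η|) * ((bohr Γ γ').card : ℝ) ≤
            ((bohr Γ ((1 + η) * γ')).card : ℝ) ∧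
          ((bohr Γ ((1 + η) * γ')).card : ℝ) ≤
            (1 + 100 * Γ.card * |η|) * ((bohr Γ γ').card : ℝ) := by
  set k : ℝ := (#Γ : ℝ)
  set δ := γ / (100 * k)
  have hδ : δ ≤ γ / 8 := calc
    δ = γ / 100 * k⁻¹ := by ring
    _ ≤ γ / 100 * 1 := by gcongr; exact Nat.cast_inv_le_one _
    _ ≤ γ / 8 := by linarith
  obtain ⟨a, ⟨ha₁, ha₂⟩, hreg⟩ := (monotone_logb_card_bohr Γ).exists_forall_sub_le_mul
    (c := γ / 2) (d := γ) (δ := δ) (l := 100 * k / γ) (by linarith) (by positivity) <|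
    (logb_card_bohr_sub_le Γ (by linarith) (by linarith)).trans <| by
      rw [show 100 * k / γ * (γ - γ / 2) / 8 = 25 / 4 * k by field_simp; ring]
      linarith [(Nat.cast_nonneg _ : (0 : ℝ) ≤ k)]
  refine ⟨a, ha₁, ha₂, fun η hη => ?_⟩
  have hx : 100 * k * |η| ≤ 1 := by
    rw [mul_comm]
    exact mul_le_of_le_div₀ zero_le_one (by positivity) hη
  have hu : |η| * a ≤ δ := calc
    |η| * a ≤ 1 / (100 * k) * γ := mul_le_mul hη ha₂ (by linarith) (by positivity)
    _ = δ := by ring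
  have hslope : 100 * k / γ * (|η| * a) ≤ 100 * k * |η| := calc
    100 * k / γ * (|η| * a) = 100 * k * |η| * (a / γ) := by ring
    _ ≤ 100 * k * |η| := mul_le_of_le_one_right (by positivity) (div_le_one_of_le₀ ha₂ hγ0.le)
  refine (monotone_card_bohr Γ).le_mul_and_le_mul_of_logb_sub_le
    (by exact_mod_cast card_bohr_pos Γ (by linarith)) hx
    ((hreg _ (mul_nonneg (abs_nonneg η) (by linarith)) hu).trans hslope) ⟨?_, ?_⟩
  · nlinarith [neg_abs_le η]
  · nlinarith [le_abs_self η]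

/-- Bourgain's regularity lemma: every Bohr set has a regular radius `γ' ∈ [γ/2, γ]`. -/
theorem stmt10 {N : ℕ} [NeZero N] (Γ : Finset (ZMod N)) (γ : ℝ) (hγ0 : 0 < γ)
    (hγ : γ ≤ 1 / 2) :
    ∃ γ' : ℝ, γ / 2 ≤ γ' ∧ γ' ≤ γ ∧
      ∀ η : ℝ, |η| ≤ 1 / (100 * Γ.card) →
        (1 - 100 * Γ.card * |η|) * ((bohr Γ γ').card : ℝ) ≤
            ((bohr Γ ((1 + η) * γ')).card : ℝ) ∧
          ((bohr Γ ((1 + η) * γ')).card : ℝ) ≤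
            (1 + 100 * Γ.card * |η|) * ((bohr Γ γ').card : ℝ) :=
  stmt10_general Γ γ hγ0
end
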